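/- Let F → E → B be a fibration of path-connected CW-complexes. Then cat(E) + 1 ≤ (cat(B) + 1)(cat(F) + 1). -/

import Mathlib

open unitInterval Set ContinuousMap

universe u

/-- `X` admits a cover by `n+1` open sets, each contractible in `X`. -/
def NullCover (X : Type*) [TopologicalSpace X] (n : ℕ) : Prop :=
  ∃ U : Fin (n + 1) → Set X, (∀ i, IsOpen (U i)) ∧ (⋃ i, U i) = Set.univ ∧
    ∀ i, (⟨Subtype.val, continuous_subtype_val⟩ : C(U i, X)).Nullhomotopic

/-- The (reduced) Lusternik-Schnirelmann category, as an extended natural number. -/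
noncomputable def LScat (X : Type*) [TopologicalSpace X] : ℕ∞ :=
  sInf ((fun n : ℕ => (n : ℕ∞)) '' {n : ℕ | NullCover X n})

/-- A Hurewicz fibration: a map with the homotopy lifting property with respect to
all spaces. -/
def IsHurewiczFibration {E B : Type u} [TopologicalSpace E] [TopologicalSpace B]
    (p : C(E, B)) : Prop :=
  ∀ (Z : Type u) [TopologicalSpace Z] (h₀ : C(Z, E)) (H : C(Z × I, B)),
    (∀ z, H (z, 0) = p (h₀ z)) →
    ∃ G : C(Z × I, E), (∀ zt : Z × I, p (G zt) = H zt) ∧ ∀ z, G (z, 0) = h₀ z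

/-- `X` is a CW-complex: it is homeomorphic to the realization of a CW-complex
structure in the sense of Mathlib. -/
def HasCWStructure (X : Type u) [TopologicalSpace X] : Prop :=
  ∃ (Y : TopCat.{u}) (_ : TopCat.CWComplex Y), Nonempty (↑Y ≃ₜ X)

/-!
Cover `B` by `m + 1` open sets `Uᵢ` contractible in `B` and the fiber `F = p⁻¹(b₀)` by
`n + 1` open sets `Vⱼ` contractible in `F`. Lifting a contraction of `Uᵢ` (followed by a
path to `b₀`) deforms the inclusion `p⁻¹(Uᵢ) ↪ E` into a map `rᵢ : p⁻¹(Uᵢ) → F`. The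
`(m + 1)(n + 1)` open sets `rᵢ⁻¹(Vⱼ)` cover `E`, and each is contractible in `E`, being
deformed by `rᵢ` into `Vⱼ`.
-/

section Contractibility

variable {X Y : Type*} [TopologicalSpace X] [TopologicalSpace Y]

def IsContractibleIn (s : Set X) : Prop :=
  (⟨Subtype.val, continuous_subtype_val⟩ : C(s, X)).Nullhomotopic

theorem ContinuousMap.Homotopic.nullhomotopic {f g : C(X, Y)} (h : f.Homotopic g)
    (hg : g.Nullhomotopic) : f.Nullhomotopic :=
  let ⟨y, hy⟩ := hg
  ⟨y, h.trans hy⟩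

theorem ContinuousMap.Nullhomotopic.homotopic_const [PathConnectedSpace Y] {f : C(X, Y)}
    (hf : f.Nullhomotopic) (y : Y) : f.Homotopic (const X y) :=
  let ⟨y', hy'⟩ := hf
  hy'.trans ⟨(PathConnectedSpace.somePath y' y).toHomotopyConst⟩

theorem isContractibleIn_image_preimage {A : Set X} {j : C(Y, X)} {r : C(A, Y)}
    (h : (⟨Subtype.val, continuous_subtype_val⟩ : C(A, X)).Homotopic (j.comp r))
    {V : Set Y} (hV : (j.comp ⟨Subtype.val, continuous_subtype_val⟩ : C(V, X)).Nullhomotopic) :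
    IsContractibleIn (Subtype.val '' (r ⁻¹' V) : Set X) := by
  have hmem : ∀ x ∈ Subtype.val '' (r ⁻¹' V), ∃ hx : x ∈ A, r ⟨x, hx⟩ ∈ V := by
    rintro _ ⟨a, ha, rfl⟩
    exact ⟨a.2, ha⟩
  let q : C(Subtype.val '' (r ⁻¹' V), A) :=
    ⟨fun w => ⟨w.1, (hmem w.1 w.2).1⟩, by fun_prop⟩
  let s : C(Subtype.val '' (r ⁻¹' V), V) :=
    ⟨fun w => ⟨r (q w), (hmem w.1 w.2).2⟩, (r.continuous.comp q.continuous).subtype_mk _⟩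
  exact (h.comp (.refl q)).nullhomotopic (hV.comp_left s)

end Contractibility

section NullCover

variable {X : Type*} [TopologicalSpace X]

theorem nullCover_of_equiv {ι : Type*} {n : ℕ} (e : ι ≃ Fin (n + 1)) (U : ι → Set X)
    (hopen : ∀ i, IsOpen (U i)) (hcover : (⋃ i, U i) = univ)
    (hcontr : ∀ i, IsContractibleIn (U i)) : NullCover X n :=
  ⟨U ∘ e.symm, fun _ => hopen _, by rw [← hcover]; exact e.symm.surjective.iUnion_comp U,
    fun _ => hcontr _⟩

theorem lscat_le_of_nullCover {n : ℕ} (h : NullCover X n) : LScat X ≤ n :=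
  sInf_le ⟨n, h, rfl⟩

theorem exists_nullCover_of_lscat_ne_top (h : LScat X ≠ ⊤) :
    ∃ n, NullCover X n ∧ LScat X = n := by
  have hne : ((fun n : ℕ => (n : ℕ∞)) '' {n : ℕ | NullCover X n}).Nonempty :=
    nonempty_iff_ne_empty.2 fun hempty => h (by rw [LScat, hempty, sInf_empty])
  obtain ⟨n, hn, hn_eq⟩ := csInf_mem hne
  exact ⟨n, hn, hn_eq.symm⟩

end NullCover

namespace IsHurewiczFibration

variable {E B Z : Type u} [TopologicalSpace E] [TopologicalSpace B] [TopologicalSpace Z]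
  {p : C(E, B)}

theorem exists_homotopic_lift (hp : IsHurewiczFibration p) {f : C(Z, E)} {g : C(Z, B)}
    (h : (p.comp f).Homotopic g) : ∃ f' : C(Z, E), f.Homotopic f' ∧ p.comp f' = g := by
  obtain ⟨H⟩ := h
  obtain ⟨G, hG_lift, hG_zero⟩ :=
    hp Z f (H.toContinuousMap.comp .prodSwap) fun z => H.apply_zero z
  refine ⟨G.comp (.prodMk (.id Z) (.const Z 1)), ⟨⟨G.comp .prodSwap, hG_zero, fun _ => rfl⟩⟩, ?_⟩
  ext z
  simpa using hG_lift (z, 1)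

theorem exists_homotopic_into_fiber [PathConnectedSpace B] (hp : IsHurewiczFibration p)
    {f : C(Z, E)} (hf : (p.comp f).Nullhomotopic) (b₀ : B) :
    ∃ r : C(Z, p ⁻¹' {b₀}),
      f.Homotopic ((⟨Subtype.val, continuous_subtype_val⟩ : C(p ⁻¹' {b₀}, E)).comp r) := by
  obtain ⟨f', hff', hpf'⟩ := hp.exists_homotopic_lift (hf.homotopic_const b₀)
  have hfiber : ∀ z, f' z ∈ p ⁻¹' {b₀} := fun z => congr($hpf' z)
  exact ⟨⟨fun z => ⟨f' z, hfiber z⟩, f'.continuous.subtype_mk _⟩, hff'⟩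

theorem nullCover_totalSpace {m n : ℕ} [PathConnectedSpace B] (hp : IsHurewiczFibration p)
    (b₀ : B) (hB : NullCover B m) (hF : NullCover (p ⁻¹' {b₀}) n) :
    NullCover E (m * n + m + n) := by
  obtain ⟨U, hU_open, hU_cover, hU_contr⟩ := hB
  obtain ⟨V, hV_open, hV_cover, hV_contr⟩ := hF
  choose r hr using fun i =>
    hp.exists_homotopic_into_fiber (f := ⟨Subtype.val, continuous_subtype_val⟩)
      ((hU_contr i).comp_left (p.restrictPreimage (U i))) b₀
  let W : Fin (m + 1) × Fin (n + 1) → Set E := fun ij => Subtype.val '' (r ij.1 ⁻¹' V ij.2)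
  refine nullCover_of_equiv (finProdFinEquiv.trans (finCongr (by ring))) W ?_ ?_ ?_
  · rintro ⟨i, j⟩
    exact ((hU_open i).preimage p.continuous).isOpenMap_subtype_val _
      ((hV_open j).preimage (r i).continuous)
  · refine eq_univ_of_forall fun e => ?_
    obtain ⟨i, hi⟩ := mem_iUnion.1 (hU_cover.ge (mem_univ (p e)))
    obtain ⟨j, hj⟩ := mem_iUnion.1 (hV_cover.ge (mem_univ (r i ⟨e, hi⟩)))
    exact mem_iUnion.2 ⟨(i, j), ⟨e, hi⟩, hj, rfl⟩
  · rintro ⟨i, j⟩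
    exact isContractibleIn_image_preimage (hr i)
      ((hV_contr j).comp_right ⟨Subtype.val, continuous_subtype_val⟩)

end IsHurewiczFibration

theorem lscat_fibration_general {E B : Type u} [TopologicalSpace E] [TopologicalSpace B]
    (p : C(E, B)) (b₀ : B) (hp : IsHurewiczFibration p)
    [PathConnectedSpace B] :
    LScat E + 1 ≤ (LScat B + 1) * (LScat ↑(p ⁻¹' {b₀}) + 1) := by
  rcases eq_or_ne (LScat B) ⊤ with hB_top | hB_fin
  · simp [hB_top]
  rcases eq_or_ne (LScat (p ⁻¹' {b₀})) ⊤ with hF_top | hF_fin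
  · simp [hF_top]
  obtain ⟨m, hm, hB_eq⟩ := exists_nullCover_of_lscat_ne_top hB_fin
  obtain ⟨n, hn, hF_eq⟩ := exists_nullCover_of_lscat_ne_top hF_fin
  calc LScat E + 1 ≤ ((m * n + m + n : ℕ) : ℕ∞) + 1 := by
        gcongr; exact lscat_le_of_nullCover (hp.nullCover_totalSpace b₀ hm hn)
    _ = (LScat B + 1) * (LScat (p ⁻¹' {b₀}) + 1) := by rw [hB_eq, hF_eq]; push_cast; ring

/-- LS-category in a fibration `F → E → B` of path-connected CW-complexes:
`cat(E) + 1 ≤ (cat(B) + 1)(cat(F) + 1)`. -/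
theorem lscat_fibration {E B : Type u} [TopologicalSpace E] [TopologicalSpace B]
    (p : C(E, B)) (b₀ : B) (hp : IsHurewiczFibration p)
    [PathConnectedSpace E] [PathConnectedSpace B]
    [PathConnectedSpace ↑(p ⁻¹' {b₀})]
    (hE : HasCWStructure E) (hB : HasCWStructure B)
    (hF : HasCWStructure ↑(p ⁻¹' {b₀})) :
    LScat E + 1 ≤ (LScat B + 1) * (LScat ↑(p ⁻¹' {b₀}) + 1) :=
  lscat_fibration_general p b₀ hp
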